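/- For every finite-dimensional right A-module M and every weight δ ∈ ℤ^n one has f_M(δ) ≤ hom(δ,M) and f̌_M(−δ) ≤ e(δ,M). Dually, for every δ̌ ∈ ℤ^n one has f̌_M(δ̌) ≤ hom(M,δ̌) and f_M(−δ̌) ≤ ě(M,δ̌). -/

import Mathlib

/-!  Common setup: tropical F-polynomials and general presentations
for a finite-dimensional basic algebra `A` over `k`, following Fei,
"Tropical F-polynomials and general presentations".
All modules are *right* `A`-modules, encoded as left `Aᵐᵒᵖ`-modules. -/

namespace TropGP

open Module MulOpposite

section Defs

variable (k : Type) [Field k]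
variable (A : Type) [Ring A] [Algebra k A]

/-- The right regular `A`-module structure on `A` is compatible with the `k`-action. -/
instance instTowerOpA : IsScalarTower k Aᵐᵒᵖ A :=
  ⟨fun c b x => by
    rw [MulOpposite.smul_eq_mul_unop, MulOpposite.smul_eq_mul_unop, MulOpposite.unop_smul,
      Algebra.mul_smul_comm]⟩

/-- Shortcut instance: scalars of `k` commute with the right `A`-action. -/
instance (priority := 5000) instSMulCommOpK (M : Type) [AddCommGroup M] [Module k M]
    [Module Aᵐᵒᵖ M] [IsScalarTower k Aᵐᵒᵖ M] : SMulCommClass Aᵐᵒᵖ k M :=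
  IsScalarTower.to_smulCommClass'

variable {n : ℕ} (e : Fin n → A)

/-- Pairing of a weight vector with an integral (dimension) vector. -/
def pz (δ β : Fin n → ℤ) : ℤ := ∑ i, δ i * β i

/-- Pairing of an integral weight vector with a real vector. -/
def przr (δ : Fin n → ℤ) (γ : Fin n → ℝ) : ℝ := ∑ i, (δ i : ℝ) * γ i

/-- Pairing of two real vectors. -/
def prr (δ γ : Fin n → ℝ) : ℝ := ∑ i, δ i * γ i

variable (M : Type) [AddCommGroup M] [Module k M] [Module Aᵐᵒᵖ M] [IsScalarTower k Aᵐᵒᵖ M]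

/-- Right multiplication by `e i`, as a `k`-linear endomorphism of a right `A`-module. -/
noncomputable def rmul (i : Fin n) : M →ₗ[k] M where
  toFun x := op (e i) • x
  map_add' x y := smul_add _ x y
  map_smul' c x := smul_comm _ c x

/-- The dimension vector: `i ↦ dim_k (M eᵢ)`. -/
noncomputable def dimVec : Fin n → ℤ :=
  fun i => (finrank k (LinearMap.range (rmul k A e M i)) : ℤ)

/-- The real dimension vector. -/
noncomputable def dimVecR : Fin n → ℝ :=
  fun i => (finrank k (LinearMap.range (rmul k A e M i)) : ℝ)

/-- The tropical F-polynomial: `f_M(δ) = max { δ(dim L) : L ⊆ M }`. -/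
noncomputable def tropF (δ : Fin n → ℤ) : ℤ :=
  sSup (Set.range fun L : Submodule Aᵐᵒᵖ M => pz δ (dimVec k A e L))

/-- The dual tropical F-polynomial: `f̌_M(δ) = max { δ(dim N) : M ↠ N }`. -/
noncomputable def tropCheck (δ : Fin n → ℤ) : ℤ :=
  sSup (Set.range fun L : Submodule Aᵐᵒᵖ M => pz δ (dimVec k A e (M ⧸ L)))

/-- The Newton polytope of `M`: the convex hull of dimension vectors of submodules. -/
noncomputable def newton : Set (Fin n → ℝ) :=
  convexHull ℝ {x | ∃ L : Submodule Aᵐᵒᵖ M, x = dimVecR k A e L}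

/-- The dual Newton polytope of `M`: convex hull of dimension vectors of quotients. -/
noncomputable def newtonCheck : Set (Fin n → ℝ) :=
  convexHull ℝ {x | ∃ L : Submodule Aᵐᵒᵖ M, x = dimVecR k A e (M ⧸ L)}

/-- King's `δ`-semistability. -/
def IsSemistable (δ : Fin n → ℤ) : Prop :=
  pz δ (dimVec k A e M) = 0 ∧ ∀ L : Submodule Aᵐᵒᵖ M, pz δ (dimVec k A e L) ≤ 0

/-- `δ`-semistability for a real weight. -/
def IsSemistableR (δ : Fin n → ℝ) : Prop :=
  prr δ (dimVecR k A e M) = 0 ∧ ∀ L : Submodule Aᵐᵒᵖ M, prr δ (dimVecR k A e L) ≤ 0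

/-- `δ`-stability. -/
def IsStable (δ : Fin n → ℤ) : Prop :=
  pz δ (dimVec k A e M) = 0 ∧
    ∀ L : Submodule Aᵐᵒᵖ M, L ≠ ⊥ → L ≠ ⊤ → pz δ (dimVec k A e L) < 0

section HomE

variable {P Q : Type} [AddCommGroup P] [Module Aᵐᵒᵖ P] [AddCommGroup Q] [Module Aᵐᵒᵖ Q]

/-- The `k`-linear map `Hom_A(Q, M) → Hom_A(P, M)` induced by `d : P → Q`. -/
noncomputable def homMap (d : P →ₗ[Aᵐᵒᵖ] Q) : (Q →ₗ[Aᵐᵒᵖ] M) →ₗ[k] (P →ₗ[Aᵐᵒᵖ] M) where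
  toFun f := f ∘ₗ d
  map_add' f g := LinearMap.add_comp _ _ _
  map_smul' c f := LinearMap.smul_comp _ _ _

/-- `dim_k Hom(d, M)`: the kernel of the induced map. -/
noncomputable def homNum (d : P →ₗ[Aᵐᵒᵖ] Q) : ℕ :=
  finrank k (LinearMap.ker (homMap k A M d))

/-- `dim_k E(d, M)`: the cokernel of the induced map. -/
noncomputable def eNum (d : P →ₗ[Aᵐᵒᵖ] Q) : ℕ :=
  finrank k ((P →ₗ[Aᵐᵒᵖ] M) ⧸ LinearMap.range (homMap k A M d))

end HomE

/-- The indecomposable projective right module `e i · A`. -/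
abbrev projP (i : Fin n) : Submodule Aᵐᵒᵖ A := Submodule.span Aᵐᵒᵖ {e i}

/-- The projective right module `P(β) = ⊕ᵢ (eᵢA)^{β i}`. -/
abbrev PP (β : Fin n → ℕ) : Type := Π i : Fin n, Fin (β i) → projP A e i

/-- The weight condition `β₊ - β₋ = δ`. -/
def HasWt (βm βp : Fin n → ℕ) (δ : Fin n → ℤ) : Prop :=
  ∀ i, (βp i : ℤ) - (βm i : ℤ) = δ i

/-- The cokernel of a projective presentation. -/
abbrev Coker {βm βp : Fin n → ℕ} (d : PP A e βm →ₗ[Aᵐᵒᵖ] PP A e βp) : Type :=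
  PP A e βp ⧸ LinearMap.range d

/-- `hom(δ, M)`: min of `dim_k Hom(d,M)` over projective presentations `d` of weight `δ`. -/
noncomputable def homWt (δ : Fin n → ℤ) : ℕ :=
  sInf {m : ℕ | ∃ (βm βp : Fin n → ℕ) (d : PP A e βm →ₗ[Aᵐᵒᵖ] PP A e βp),
    HasWt βm βp δ ∧ m = homNum k A M d}

/-- `e(δ, M)`: min of `dim_k E(d,M)` over projective presentations `d` of weight `δ`. -/
noncomputable def eWt (δ : Fin n → ℤ) : ℕ :=
  sInf {m : ℕ | ∃ (βm βp : Fin n → ℕ) (d : PP A e βm →ₗ[Aᵐᵒᵖ] PP A e βp),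
    HasWt βm βp δ ∧ m = eNum k A M d}

/-- The indecomposable left module `A · e i`. -/
abbrev projL (i : Fin n) : Submodule A A := Submodule.span A {e i}

section DualMod

variable (V : Type) [AddCommGroup V] [Module k V] [Module A V] [IsScalarTower k A V]

/-- Left multiplication by `a` as a `k`-linear endomorphism of a left module. -/
noncomputable def lact (a : A) : V →ₗ[k] V where
  toFun x := a • x
  map_add' x y := smul_add a x y
  map_smul' c x := smul_comm a c x

/-- The right `A`-action on the `k`-dual of a left `A`-module. -/
noncomputable instance dualSMul : SMul Aᵐᵒᵖ (V →ₗ[k] k) :=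
  ⟨fun a f => f ∘ₗ lact k A V a.unop⟩

@[simp] lemma dual_smul_apply (a : Aᵐᵒᵖ) (f : V →ₗ[k] k) (x : V) :
    (a • f) x = f (a.unop • x) := rfl

/-- The `k`-dual of a left `A`-module is a right `A`-module. -/
noncomputable instance dualModule : Module Aᵐᵒᵖ (V →ₗ[k] k) :=
  { dualSMul k A V with
    one_smul := fun f => by ext x; simp
    mul_smul := fun a b f => by ext x; simp [mul_smul]
    smul_zero := fun a => by ext x; simp
    smul_add := fun a f g => by ext x; simp
    add_smul := fun a b f => by ext x; simp [add_smul]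
    zero_smul := fun f => by ext x; simp }

instance dualSMulComm : SMulCommClass Aᵐᵒᵖ k (V →ₗ[k] k) :=
  ⟨fun a c f => by ext x; simp⟩

instance dualTower : IsScalarTower k Aᵐᵒᵖ (V →ₗ[k] k) :=
  ⟨fun c a f => by ext x; simp [MulOpposite.unop_smul, smul_assoc]⟩

end DualMod

/-- The indecomposable injective right module `Iᵢ = D(A eᵢ)`,
the `k`-dual of the left module `A eᵢ`. -/
abbrev IP (i : Fin n) : Type := (projL A e i) →ₗ[k] k

/-- The injective right module `I(β) = ⊕ᵢ Iᵢ^{β i}`. -/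
abbrev IM (β : Fin n → ℕ) : Type := Π i : Fin n, Fin (β i) → IP k A e i

section PostMap

variable {I J : Type} [AddCommGroup I] [Module k I] [Module Aᵐᵒᵖ I] [IsScalarTower k Aᵐᵒᵖ I]
variable [AddCommGroup J] [Module k J] [Module Aᵐᵒᵖ J] [IsScalarTower k Aᵐᵒᵖ J]

/-- The `k`-linear map `Hom_A(M, I) → Hom_A(M, J)` induced by `dc : I → J`. -/
noncomputable def postMap (dc : I →ₗ[Aᵐᵒᵖ] J) :
    (M →ₗ[Aᵐᵒᵖ] I) →ₗ[k] (M →ₗ[Aᵐᵒᵖ] J) where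
  toFun f := dc ∘ₗ f
  map_add' f g := LinearMap.comp_add _ _ _
  map_smul' c f := by
    ext x
    simp only [LinearMap.comp_apply, LinearMap.smul_apply, RingHom.id_apply]
    rw [← algebraMap_smul Aᵐᵒᵖ c (f x), LinearMap.map_smul, algebraMap_smul]

end PostMap

/-- `hom(M, δ̌)`: min of `dim_k Hom(M, ď)` over injective presentations `ď` of weight `δ̌`. -/
noncomputable def ihomWt (δc : Fin n → ℤ) : ℕ :=
  sInf {m : ℕ | ∃ (βp βm : Fin n → ℕ) (dc : IM k A e βp →ₗ[Aᵐᵒᵖ] IM k A e βm),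
    HasWt βm βp δc ∧ m = finrank k (LinearMap.ker (postMap k A M dc))}

/-- `ě(M, δ̌)`: min of `dim_k Ě(M, ď)` over injective presentations `ď` of weight `δ̌`. -/
noncomputable def ieWt (δc : Fin n → ℤ) : ℕ :=
  sInf {m : ℕ | ∃ (βp βm : Fin n → ℕ) (dc : IM k A e βp →ₗ[Aᵐᵒᵖ] IM k A e βm),
    HasWt βm βp δc ∧
      m = Module.finrank k (@HasQuotient.Quotient (M →ₗ[Aᵐᵒᵖ] IM k A e βm) _
        (@Submodule.hasQuotient k (M →ₗ[Aᵐᵒᵖ] IM k A e βm) _ _ _)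
        (LinearMap.range (postMap k A M dc)))}

/-- `e(δ, δ) = 0`: there are projective presentations `d, d'` of weight `δ` with
`E(d, Coker d') = 0`, i.e. the induced map on `Hom`s is surjective. -/
def EWtSelfZero (δ : Fin n → ℤ) : Prop :=
  ∃ (βm βp : Fin n → ℕ) (d : PP A e βm →ₗ[Aᵐᵒᵖ] PP A e βp)
    (βm' βp' : Fin n → ℕ) (d' : PP A e βm' →ₗ[Aᵐᵒᵖ] PP A e βp'),
    HasWt βm βp δ ∧ HasWt βm' βp' δ ∧
      Function.Surjective (homMap k A (Coker A e d') d)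

/-- `e₁, …, e_n` is a complete set of primitive orthogonal idempotents and `A` is basic:
the indecomposable projectives `eᵢA` are pairwise non-isomorphic. -/
def IsBasicSetup : Prop :=
  (∀ i, IsIdempotentElem (e i)) ∧
  (∀ i j, i ≠ j → e i * e j = 0) ∧
  (∑ i, e i = 1) ∧
  (∀ i, e i ≠ 0 ∧ ∀ f g : A, IsIdempotentElem f → IsIdempotentElem g →
      f * g = 0 → g * f = 0 → f + g = e i → f = 0 ∨ g = 0) ∧
  (∀ i j, i ≠ j → IsEmpty (projP A e i ≃ₗ[Aᵐᵒᵖ] projP A e j))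

end Defs

/-!
If `d : P₋ → P₊` has weight `δ`, then `Hom_A(eᵢA, X) ≅ X eᵢ` gives
`dim Hom(P₊, X) - dim Hom(P₋, X) = δ(dim X)`, hence `hom(d, X) - e(d, X) = δ(dim X)` for every
module `X`. `Hom(d, -)` is left exact, so for `L ⊆ M` we get `δ(dim L) ≤ hom(d, L) ≤ hom(d, M)`;
`E(d, -)` is right exact because `P₋` is projective, so for a quotient `N` of `M` we get
`-δ(dim N) ≤ e(d, N) ≤ e(d, M)`. Taking `d` minimal gives the first pair of inequalities. The dual
pair is the same argument for injective presentations, using `Hom_A(X, D(Aeᵢ)) ≅ D(X eᵢ)` and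
exchanging the roles of submodules and quotients.
-/

lemma le_natCast_sInf {x : ℤ} {S : Set ℕ} (hS : S.Nonempty) (h : ∀ m ∈ S, x ≤ m) :
    x ≤ (sInf S : ℕ) :=
  h _ (Nat.sInf_mem hS)

section LinearAlgebra

variable {k : Type} [Field k]
variable {V W V' W' : Type} [AddCommGroup V] [Module k V] [AddCommGroup W] [Module k W]
  [AddCommGroup V'] [Module k V'] [AddCommGroup W'] [Module k W']

lemma finrank_ker_sub_finrank_coker [FiniteDimensional k V] [FiniteDimensional k W]
    (T : V →ₗ[k] W) :
    (finrank k (LinearMap.ker T) : ℤ) - finrank k (W ⧸ LinearMap.range T)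
      = finrank k V - finrank k W := by
  have := LinearMap.finrank_range_add_finrank_ker T
  have := Submodule.finrank_quotient_add_finrank (LinearMap.range T)
  omega

lemma finrank_ker_le_of_injective [FiniteDimensional k V'] (T : V →ₗ[k] W) (T' : V' →ₗ[k] W')
    {ι : V →ₗ[k] V'} (hι : Function.Injective ι)
    (h : LinearMap.ker T ≤ (LinearMap.ker T').comap ι) :
    finrank k (LinearMap.ker T) ≤ finrank k (LinearMap.ker T') :=
  LinearMap.finrank_le_finrank_of_injective (f := ι.restrict h)
    fun _ _ hxy => Subtype.ext (hι (congrArg Subtype.val hxy))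

lemma finrank_coker_le_of_surjective [FiniteDimensional k W] (T : V →ₗ[k] W) (T' : V' →ₗ[k] W')
    {s : W →ₗ[k] W'} (hs : Function.Surjective s)
    (h : LinearMap.range T ≤ (LinearMap.range T').comap s) :
    finrank k (W' ⧸ LinearMap.range T') ≤ finrank k (W ⧸ LinearMap.range T) := by
  refine LinearMap.finrank_le_finrank_of_surjective (f := (LinearMap.range T).mapQ _ s h) ?_
  intro x
  obtain ⟨w', rfl⟩ := Submodule.mkQ_surjective _ x
  obtain ⟨w, rfl⟩ := hs w'
  exact ⟨Submodule.Quotient.mk w, rfl⟩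

end LinearAlgebra

section Components

variable (k : Type) [Field k] (A : Type) [Ring A] [Algebra k A] {n : ℕ} (e : Fin n → A)
variable (M N : Type) [AddCommGroup M] [Module k M] [Module Aᵐᵒᵖ M] [IsScalarTower k Aᵐᵒᵖ M]
  [AddCommGroup N] [Module k N] [Module Aᵐᵒᵖ N] [IsScalarTower k Aᵐᵒᵖ N]

instance finiteDimensional_submodule [FiniteDimensional k M] (L : Submodule Aᵐᵒᵖ M) :
    FiniteDimensional k L :=
  inferInstanceAs (FiniteDimensional k (L.restrictScalars k))

noncomputable abbrev component (i : Fin n) : Submodule k M := LinearMap.range (rmul k A e M i)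

variable {M} {i : Fin n}

lemma rmul_apply (i : Fin n) (m : M) : rmul k A e M i m = op (e i) • m := rfl

lemma mem_component_iff (he : IsIdempotentElem (e i)) {m : M} :
    m ∈ component k A e M i ↔ op (e i) • m = m := by
  constructor
  · rintro ⟨y, rfl⟩
    rw [rmul_apply, ← mul_smul, ← op_mul, he]
  · intro h
    exact ⟨m, h⟩

variable (M)

noncomputable def componentMap (g : M →ₗ[Aᵐᵒᵖ] N) (i : Fin n) :
    component k A e M i →ₗ[k] component k A e N i where
  toFun m := ⟨g m, by
    obtain ⟨y, hy⟩ := m.2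
    exact ⟨g y, by rw [rmul_apply, ← g.map_smul]; exact congrArg g hy⟩⟩
  map_add' x y := Subtype.ext (g.map_add _ _)
  map_smul' c x := Subtype.ext (g.map_smul_of_tower c _)

lemma componentMap_apply_coe (g : M →ₗ[Aᵐᵒᵖ] N) (i : Fin n) (m : component k A e M i) :
    (componentMap k A e M N g i m : N) = g m := rfl

lemma componentMap_surjective {g : M →ₗ[Aᵐᵒᵖ] N} (hg : Function.Surjective g) (i : Fin n) :
    Function.Surjective (componentMap k A e M N g i) := by
  rintro ⟨y, z, hz⟩
  obtain ⟨x, rfl⟩ := hg z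
  exact ⟨⟨op (e i) • x, x, rfl⟩, Subtype.ext (by rw [componentMap_apply_coe, g.map_smul]; exact hz)⟩

lemma componentMap_injective {g : M →ₗ[Aᵐᵒᵖ] N} (hg : Function.Injective g) (i : Fin n) :
    Function.Injective (componentMap k A e M N g i) := fun _ _ hxy =>
  Subtype.ext (hg (congrArg Subtype.val hxy))

end Components

section Projective

variable (k : Type) [Field k] (A : Type) [Ring A] [Algebra k A] {n : ℕ} (e : Fin n → A)
variable (M N : Type) [AddCommGroup M] [Module k M] [Module Aᵐᵒᵖ M] [IsScalarTower k Aᵐᵒᵖ M]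
  [AddCommGroup N] [Module k N] [Module Aᵐᵒᵖ N] [IsScalarTower k Aᵐᵒᵖ N]

variable {A e} in
lemma idem_mul_of_mem_projP {i : Fin n} (he : IsIdempotentElem (e i)) {x : A}
    (hx : x ∈ projP A e i) : e i * x = x := by
  obtain ⟨a, rfl⟩ := Submodule.mem_span_singleton.1 hx
  rw [MulOpposite.smul_eq_mul_unop, ← mul_assoc, he]

noncomputable def projPGen (i : Fin n) : projP A e i :=
  ⟨e i, Submodule.mem_span_singleton_self _⟩

noncomputable def homProjPEquiv {i : Fin n} (he : IsIdempotentElem (e i)) :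
    (projP A e i →ₗ[Aᵐᵒᵖ] M) ≃ₗ[k] component k A e M i where
  toFun f := ⟨f (projPGen A e i), by
    refine (mem_component_iff k A e he).2 ?_
    rw [← f.map_smul]
    congr 1
    exact Subtype.ext (idem_mul_of_mem_projP he (projPGen A e i).2)⟩
  invFun m :=
    { toFun := fun x => op (x : A) • (m : M)
      map_add' := fun x y => by
        show op ((x : A) + y) • _ = _
        rw [op_add, add_smul]
      map_smul' := fun a x => by
        show op ((x : A) * a.unop) • (m : M) = a • (op (x : A) • (m : M))
        rw [op_mul, mul_smul, op_unop] }
  map_add' _ _ := rfl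
  map_smul' _ _ := rfl
  left_inv f := by
    ext x
    show op (x : A) • f (projPGen A e i) = f x
    rw [← f.map_smul]
    congr 1
    exact Subtype.ext (idem_mul_of_mem_projP he x.2)
  right_inv m := Subtype.ext ((mem_component_iff k A e he).1 m.2)

noncomputable def homPPEquiv (he : ∀ i, IsIdempotentElem (e i)) (β : Fin n → ℕ) :
    (PP A e β →ₗ[Aᵐᵒᵖ] M) ≃ₗ[k] Π i, Fin (β i) → component k A e M i :=
  (LinearMap.lsum Aᵐᵒᵖ (fun i => Fin (β i) → projP A e i) k).symm.trans <|
    .piCongrRight fun i =>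
      (LinearMap.lsum Aᵐᵒᵖ (fun _ : Fin (β i) => projP A e i) k).symm.trans <|
        .piCongrRight fun _ => homProjPEquiv k A e M (he i)

lemma homPPEquiv_comp (he : ∀ i, IsIdempotentElem (e i)) {β : Fin n → ℕ}
    (g : M →ₗ[Aᵐᵒᵖ] N) (f : PP A e β →ₗ[Aᵐᵒᵖ] M) (i : Fin n) (j : Fin (β i)) :
    homPPEquiv k A e N he β (g ∘ₗ f) i j
      = componentMap k A e M N g i (homPPEquiv k A e M he β f i j) :=
  rfl

include k in
lemma PP_lifting_property (he : ∀ i, IsIdempotentElem (e i)) {β : Fin n → ℕ}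
    {g : M →ₗ[Aᵐᵒᵖ] N} (hg : Function.Surjective g) (h : PP A e β →ₗ[Aᵐᵒᵖ] N) :
    ∃ f : PP A e β →ₗ[Aᵐᵒᵖ] M, g ∘ₗ f = h := by
  choose t ht using fun i j =>
    componentMap_surjective k A e M N hg i (homPPEquiv k A e N he β h i j)
  refine ⟨(homPPEquiv k A e M he β).symm t, (homPPEquiv k A e N he β).injective ?_⟩
  funext i j
  rw [homPPEquiv_comp, LinearEquiv.apply_symm_apply]
  exact ht i j

lemma finiteDimensional_homPP [FiniteDimensional k M] (he : ∀ i, IsIdempotentElem (e i))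
    (β : Fin n → ℕ) : FiniteDimensional k (PP A e β →ₗ[Aᵐᵒᵖ] M) :=
  LinearEquiv.finiteDimensional (homPPEquiv k A e M he β).symm

lemma finrank_homPP [FiniteDimensional k M] (he : ∀ i, IsIdempotentElem (e i)) (β : Fin n → ℕ) :
    finrank k (PP A e β →ₗ[Aᵐᵒᵖ] M) = ∑ i, β i * finrank k (component k A e M i) := by
  simp only [(homPPEquiv k A e M he β).finrank_eq, Module.finrank_pi_fintype, Finset.sum_const,
    Finset.card_univ, Fintype.card_fin, smul_eq_mul]

end Projective

section Injective

variable (k : Type) [Field k] (A : Type) [Ring A] [Algebra k A] {n : ℕ} (e : Fin n → A)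
variable (M N : Type) [AddCommGroup M] [Module k M] [Module Aᵐᵒᵖ M] [IsScalarTower k Aᵐᵒᵖ M]
  [AddCommGroup N] [Module k N] [Module Aᵐᵒᵖ N] [IsScalarTower k Aᵐᵒᵖ N]

variable {A e} in
lemma mul_idem_of_mem_projL {i : Fin n} (he : IsIdempotentElem (e i)) {x : A}
    (hx : x ∈ projL A e i) : x * e i = x := by
  obtain ⟨a, rfl⟩ := Submodule.mem_span_singleton.1 hx
  rw [smul_eq_mul, mul_assoc, he]

noncomputable def projLGen (i : Fin n) : projL A e i :=
  ⟨e i, Submodule.mem_span_singleton_self _⟩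

variable {M} in
lemma op_smul_mem_component {i : Fin n} {x : A} (hx : x ∈ projL A e i) (m : M) :
    op x • m ∈ component k A e M i := by
  obtain ⟨a, rfl⟩ := Submodule.mem_span_singleton.1 hx
  rw [smul_eq_mul, op_mul, mul_smul]
  exact ⟨op a • m, rfl⟩

noncomputable def homIPOfDual {i : Fin n} (φ : component k A e M i →ₗ[k] k) :
    M →ₗ[Aᵐᵒᵖ] IP k A e i where
  toFun m :=
    { toFun := fun x => φ ⟨op (x : A) • m, op_smul_mem_component k A e x.2 m⟩
      map_add' := fun x y => by
        rw [← φ.map_add]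
        exact congrArg φ (Subtype.ext (show op ((x : A) + (y : A)) • m
          = op (x : A) • m + op (y : A) • m by rw [op_add, add_smul]))
      map_smul' := fun c x => by
        rw [RingHom.id_apply, ← φ.map_smul]
        exact congrArg φ (Subtype.ext (show op (c • (x : A)) • m
          = c • (op (x : A) • m) by rw [op_smul, smul_assoc])) }
  map_add' m m' := by
    ext x
    show φ _ = φ _ + φ _
    rw [← φ.map_add]
    exact congrArg φ (Subtype.ext (smul_add (op (x : A)) m m'))
  map_smul' a m := by
    ext x
    show φ ⟨op (x : A) • a • m, _⟩ = φ ⟨op (a.unop * (x : A)) • m, _⟩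
    exact congrArg φ (Subtype.ext (show op (x : A) • a • m
      = op (a.unop * (x : A)) • m by rw [op_mul, mul_smul, op_unop]))

noncomputable def homIPEquiv {i : Fin n} (he : IsIdempotentElem (e i)) :
    (M →ₗ[Aᵐᵒᵖ] IP k A e i) ≃ₗ[k] (component k A e M i →ₗ[k] k) where
  toFun f :=
    { toFun := fun m => f (m : M) (projLGen A e i)
      map_add' := fun x y => by
        simp only [Submodule.coe_add, map_add, LinearMap.add_apply]
      map_smul' := fun c x => by
        simp only [Submodule.coe_smul, RingHom.id_apply,
          LinearMap.map_smul_of_tower, LinearMap.smul_apply] }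
  invFun := homIPOfDual k A e M
  map_add' _ _ := rfl
  map_smul' _ _ := rfl
  left_inv f := by
    ext m x
    show f (op (x : A) • m) (projLGen A e i) = f m x
    rw [f.map_smul, dual_smul_apply]
    exact congrArg (f m) (Subtype.ext (mul_idem_of_mem_projL he x.2))
  right_inv φ := by
    ext m
    exact congrArg φ (Subtype.ext ((mem_component_iff k A e he).1 m.2))

noncomputable def homPiEquiv {ι : Type} (φ : ι → Type) [∀ i, AddCommGroup (φ i)]
    [∀ i, Module Aᵐᵒᵖ (φ i)] [∀ i, Module k (φ i)] [∀ i, IsScalarTower k Aᵐᵒᵖ (φ i)] :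
    (M →ₗ[Aᵐᵒᵖ] Π i, φ i) ≃ₗ[k] Π i, (M →ₗ[Aᵐᵒᵖ] φ i) where
  toFun f i := LinearMap.proj i ∘ₗ f
  invFun g := LinearMap.pi g
  map_add' _ _ := rfl
  map_smul' _ _ := rfl
  left_inv _ := rfl
  right_inv _ := rfl

noncomputable def homIMEquiv (he : ∀ i, IsIdempotentElem (e i)) (β : Fin n → ℕ) :
    (M →ₗ[Aᵐᵒᵖ] IM k A e β) ≃ₗ[k] Π i, Fin (β i) → (component k A e M i →ₗ[k] k) :=
  (homPiEquiv k A M _).trans <|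
    .piCongrRight fun i =>
      (homPiEquiv k A M _).trans <|
        .piCongrRight fun _ => homIPEquiv k A e M (he i)

lemma homIMEquiv_comp (he : ∀ i, IsIdempotentElem (e i)) {β : Fin n → ℕ}
    (g : N →ₗ[Aᵐᵒᵖ] M) (f : M →ₗ[Aᵐᵒᵖ] IM k A e β) (i : Fin n) (j : Fin (β i)) :
    homIMEquiv k A e N he β (f ∘ₗ g) i j
      = homIMEquiv k A e M he β f i j ∘ₗ componentMap k A e N M g i :=
  rfl

include k in
lemma IM_extension_property (he : ∀ i, IsIdempotentElem (e i)) {β : Fin n → ℕ}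
    {g : N →ₗ[Aᵐᵒᵖ] M} (hg : Function.Injective g) (h : N →ₗ[Aᵐᵒᵖ] IM k A e β) :
    ∃ f : M →ₗ[Aᵐᵒᵖ] IM k A e β, f ∘ₗ g = h := by
  choose r hr using fun i => (componentMap k A e N M g i).exists_leftInverse_of_injective
    (LinearMap.ker_eq_bot.2 (componentMap_injective k A e N M hg i))
  refine ⟨(homIMEquiv k A e M he β).symm fun i j => homIMEquiv k A e N he β h i j ∘ₗ r i,
    (homIMEquiv k A e N he β).injective ?_⟩
  funext i j
  rw [homIMEquiv_comp, LinearEquiv.apply_symm_apply, LinearMap.comp_assoc, hr, LinearMap.comp_id]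

lemma finiteDimensional_homIM [FiniteDimensional k M] (he : ∀ i, IsIdempotentElem (e i))
    (β : Fin n → ℕ) : FiniteDimensional k (M →ₗ[Aᵐᵒᵖ] IM k A e β) :=
  LinearEquiv.finiteDimensional (homIMEquiv k A e M he β).symm

lemma finrank_homIM [FiniteDimensional k M] (he : ∀ i, IsIdempotentElem (e i)) (β : Fin n → ℕ) :
    finrank k (M →ₗ[Aᵐᵒᵖ] IM k A e β) = ∑ i, β i * finrank k (component k A e M i) := by
  simp only [(homIMEquiv k A e M he β).finrank_eq, Module.finrank_pi_fintype, Finset.sum_const,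
    Finset.card_univ, Fintype.card_fin, smul_eq_mul, Subspace.dual_finrank_eq]

end Injective

section Monotone

variable (k : Type) [Field k] (A : Type) [Ring A] [Algebra k A]

section OfProjective

variable (M N : Type) [AddCommGroup M] [Module k M] [Module Aᵐᵒᵖ M] [IsScalarTower k Aᵐᵒᵖ M]
  [AddCommGroup N] [Module k N] [Module Aᵐᵒᵖ N] [IsScalarTower k Aᵐᵒᵖ N]
variable {P Q : Type} [AddCommGroup P] [Module Aᵐᵒᵖ P] [AddCommGroup Q] [Module Aᵐᵒᵖ Q]

lemma homNum_le_of_injective [FiniteDimensional k (Q →ₗ[Aᵐᵒᵖ] M)] (d : P →ₗ[Aᵐᵒᵖ] Q)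
    {ι : N →ₗ[Aᵐᵒᵖ] M} (hι : Function.Injective ι) : homNum k A N d ≤ homNum k A M d :=
  finrank_ker_le_of_injective _ _ (ι := postMap k A Q ι)
    (fun _ _ hfg => LinearMap.ext fun x => hι (LinearMap.congr_fun hfg x))
    (fun f hf => by
      change ι ∘ₗ (f ∘ₗ d) = 0
      rw [show f ∘ₗ d = 0 from hf, LinearMap.comp_zero])

lemma eNum_le_of_lifting [FiniteDimensional k (P →ₗ[Aᵐᵒᵖ] M)] (d : P →ₗ[Aᵐᵒᵖ] Q)
    {π : M →ₗ[Aᵐᵒᵖ] N} (hP : ∀ h : P →ₗ[Aᵐᵒᵖ] N, ∃ f : P →ₗ[Aᵐᵒᵖ] M, π ∘ₗ f = h) :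
    eNum k A N d ≤ eNum k A M d :=
  finrank_coker_le_of_surjective _ _ (s := postMap k A P π) hP <| by
    rintro _ ⟨f, rfl⟩
    exact ⟨π ∘ₗ f, rfl⟩

end OfProjective

section OfInjective

variable (M N : Type) [AddCommGroup M] [Module Aᵐᵒᵖ M] [AddCommGroup N] [Module Aᵐᵒᵖ N]
variable {P Q : Type} [AddCommGroup P] [Module k P] [Module Aᵐᵒᵖ P] [IsScalarTower k Aᵐᵒᵖ P]
  [AddCommGroup Q] [Module k Q] [Module Aᵐᵒᵖ Q] [IsScalarTower k Aᵐᵒᵖ Q]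

/-- `dim_k Hom(M, ď)`. -/
noncomputable def ihomNum (dc : P →ₗ[Aᵐᵒᵖ] Q) : ℕ :=
  finrank k (LinearMap.ker (postMap k A M dc))

/-- `dim_k Ě(M, ď)`. -/
noncomputable def ieNum (dc : P →ₗ[Aᵐᵒᵖ] Q) : ℕ :=
  finrank k ((M →ₗ[Aᵐᵒᵖ] Q) ⧸ LinearMap.range (postMap k A M dc))

lemma ihomNum_le_of_surjective [FiniteDimensional k (M →ₗ[Aᵐᵒᵖ] P)] (dc : P →ₗ[Aᵐᵒᵖ] Q)
    {π : M →ₗ[Aᵐᵒᵖ] N} (hπ : Function.Surjective π) : ihomNum k A N dc ≤ ihomNum k A M dc :=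
  finrank_ker_le_of_injective _ _ (ι := homMap k A P π)
    (fun _ _ hfg => LinearMap.ext fun x => by
      obtain ⟨y, rfl⟩ := hπ x
      exact LinearMap.congr_fun hfg y)
    (fun f hf => by
      change (dc ∘ₗ f) ∘ₗ π = 0
      rw [show dc ∘ₗ f = 0 from hf, LinearMap.zero_comp])

lemma ieNum_le_of_extension [FiniteDimensional k (M →ₗ[Aᵐᵒᵖ] Q)] (dc : P →ₗ[Aᵐᵒᵖ] Q)
    {ι : N →ₗ[Aᵐᵒᵖ] M} (hQ : ∀ h : N →ₗ[Aᵐᵒᵖ] Q, ∃ f : M →ₗ[Aᵐᵒᵖ] Q, f ∘ₗ ι = h) :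
    ieNum k A N dc ≤ ieNum k A M dc :=
  finrank_coker_le_of_surjective _ _ (s := homMap k A Q ι) hQ <| by
    rintro _ ⟨f, rfl⟩
    exact ⟨f ∘ₗ ι, rfl⟩

end OfInjective

end Monotone

section Presentations

variable (k : Type) [Field k] (A : Type) [Ring A] [Algebra k A] {n : ℕ} (e : Fin n → A)
variable (M : Type) [AddCommGroup M] [Module k M] [Module Aᵐᵒᵖ M] [IsScalarTower k Aᵐᵒᵖ M]

lemma pz_neg (δ β : Fin n → ℤ) : pz (-δ) β = -pz δ β := by
  simp [pz, Finset.sum_neg_distrib]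

lemma hasWt_toNat (δ : Fin n → ℤ) : HasWt (fun i => (-δ i).toNat) (fun i => (δ i).toNat) δ :=
  fun i => show ((δ i).toNat : ℤ) - ((-δ i).toNat : ℤ) = δ i by omega

lemma HasWt.sum_sub_sum {βm βp : Fin n → ℕ} {δ : Fin n → ℤ} (hw : HasWt βm βp δ)
    (c : Fin n → ℕ) :
    ((∑ i, βp i * c i : ℕ) : ℤ) - (∑ i, βm i * c i : ℕ) = pz δ fun i => (c i : ℤ) := by
  simp only [pz, Nat.cast_sum, Nat.cast_mul, ← Finset.sum_sub_distrib]
  exact Finset.sum_congr rfl fun i _ => by rw [← hw i]; ring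

variable {βm βp : Fin n → ℕ} {δ : Fin n → ℤ}

lemma homNum_sub_eNum [FiniteDimensional k M] (he : ∀ i, IsIdempotentElem (e i))
    (d : PP A e βm →ₗ[Aᵐᵒᵖ] PP A e βp) (hw : HasWt βm βp δ) :
    (homNum k A M d : ℤ) - eNum k A M d = pz δ (dimVec k A e M) := by
  have := finiteDimensional_homPP k A e M he βm
  have := finiteDimensional_homPP k A e M he βp
  rw [homNum, eNum, finrank_ker_sub_finrank_coker, finrank_homPP k A e M he βp,
    finrank_homPP k A e M he βm]
  exact hw.sum_sub_sum _

lemma ihomNum_sub_ieNum [FiniteDimensional k M] (he : ∀ i, IsIdempotentElem (e i))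
    (dc : IM k A e βp →ₗ[Aᵐᵒᵖ] IM k A e βm) (hw : HasWt βm βp δ) :
    (ihomNum k A M dc : ℤ) - ieNum k A M dc = pz δ (dimVec k A e M) := by
  have := finiteDimensional_homIM k A e M he βm
  have := finiteDimensional_homIM k A e M he βp
  rw [ihomNum, ieNum, finrank_ker_sub_finrank_coker (postMap k A M dc),
    finrank_homIM k A e M he βp, finrank_homIM k A e M he βm]
  exact hw.sum_sub_sum _

lemma tropF_le_homNum [FiniteDimensional k M] (he : ∀ i, IsIdempotentElem (e i))
    (d : PP A e βm →ₗ[Aᵐᵒᵖ] PP A e βp) (hw : HasWt βm βp δ) :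
    tropF k A e M δ ≤ homNum k A M d := by
  have := finiteDimensional_homPP k A e M he βp
  refine ciSup_le fun L => ?_
  have := homNum_sub_eNum k A e L he d hw
  have := homNum_le_of_injective k A M L d L.injective_subtype
  omega

lemma tropCheck_neg_le_eNum [FiniteDimensional k M] (he : ∀ i, IsIdempotentElem (e i))
    (d : PP A e βm →ₗ[Aᵐᵒᵖ] PP A e βp) (hw : HasWt βm βp δ) :
    tropCheck k A e M (-δ) ≤ eNum k A M d := by
  have := finiteDimensional_homPP k A e M he βm
  refine ciSup_le fun L => ?_
  have := homNum_sub_eNum k A e (M ⧸ L) he d hw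
  have := eNum_le_of_lifting k A M (M ⧸ L) d
    (PP_lifting_property k A e M (M ⧸ L) he L.mkQ_surjective)
  rw [pz_neg]
  omega

lemma tropCheck_le_ihomNum [FiniteDimensional k M] (he : ∀ i, IsIdempotentElem (e i))
    (dc : IM k A e βp →ₗ[Aᵐᵒᵖ] IM k A e βm) (hw : HasWt βm βp δ) :
    tropCheck k A e M δ ≤ ihomNum k A M dc := by
  have := finiteDimensional_homIM k A e M he βp
  refine ciSup_le fun L => ?_
  have := ihomNum_sub_ieNum k A e (M ⧸ L) he dc hw
  have := ihomNum_le_of_surjective k A M (M ⧸ L) dc L.mkQ_surjective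
  omega

lemma tropF_neg_le_ieNum [FiniteDimensional k M] (he : ∀ i, IsIdempotentElem (e i))
    (dc : IM k A e βp →ₗ[Aᵐᵒᵖ] IM k A e βm) (hw : HasWt βm βp δ) :
    tropF k A e M (-δ) ≤ ieNum k A M dc := by
  have := finiteDimensional_homIM k A e M he βm
  refine ciSup_le fun L => ?_
  have := ihomNum_sub_ieNum k A e L he dc hw
  have := ieNum_le_of_extension k A M L dc
    (IM_extension_property k A e M L he L.injective_subtype)
  rw [pz_neg]
  omega

variable (δ)

lemma tropF_le_homWt [FiniteDimensional k M] (he : ∀ i, IsIdempotentElem (e i)) :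
    tropF k A e M δ ≤ homWt k A e M δ :=
  le_natCast_sInf ⟨_, _, _, 0, hasWt_toNat δ, rfl⟩ fun _ ⟨_, _, d, hw, hm⟩ =>
    hm ▸ tropF_le_homNum k A e M he d hw

lemma tropCheck_neg_le_eWt [FiniteDimensional k M] (he : ∀ i, IsIdempotentElem (e i)) :
    tropCheck k A e M (-δ) ≤ eWt k A e M δ :=
  le_natCast_sInf ⟨_, _, _, 0, hasWt_toNat δ, rfl⟩ fun _ ⟨_, _, d, hw, hm⟩ =>
    hm ▸ tropCheck_neg_le_eNum k A e M he d hw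

lemma tropCheck_le_ihomWt [FiniteDimensional k M] (he : ∀ i, IsIdempotentElem (e i)) :
    tropCheck k A e M δ ≤ ihomWt k A e M δ :=
  le_natCast_sInf ⟨_, _, _, 0, hasWt_toNat δ, rfl⟩ fun _ ⟨_, _, dc, hw, hm⟩ =>
    hm ▸ tropCheck_le_ihomNum k A e M he dc hw

lemma tropF_neg_le_ieWt [FiniteDimensional k M] (he : ∀ i, IsIdempotentElem (e i)) :
    tropF k A e M (-δ) ≤ ieWt k A e M δ :=
  le_natCast_sInf ⟨_, _, _, 0, hasWt_toNat δ, rfl⟩ fun _ ⟨_, _, dc, hw, hm⟩ =>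
    hm ▸ tropF_neg_le_ieNum k A e M he dc hw

end Presentations

end TropGP

open TropGP Module MulOpposite

theorem statement0_general (k : Type) [Field k]
    (A : Type) [Ring A] [Algebra k A]
    {n : ℕ} (e : Fin n → A) (hA : IsBasicSetup A e)
    (M : Type) [AddCommGroup M] [Module k M] [Module Aᵐᵒᵖ M]
    [IsScalarTower k Aᵐᵒᵖ M] [FiniteDimensional k M] :
    (∀ δ : Fin n → ℤ,
      tropF k A e M δ ≤ (homWt k A e M δ : ℤ) ∧
      tropCheck k A e M (-δ) ≤ (eWt k A e M δ : ℤ)) ∧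
    (∀ δc : Fin n → ℤ,
      tropCheck k A e M δc ≤ (ihomWt k A e M δc : ℤ) ∧
      tropF k A e M (-δc) ≤ (ieWt k A e M δc : ℤ)) :=
  ⟨fun δ => ⟨tropF_le_homWt k A e M δ hA.1, tropCheck_neg_le_eWt k A e M δ hA.1⟩,
    fun δc => ⟨tropCheck_le_ihomWt k A e M δc hA.1, tropF_neg_le_ieWt k A e M δc hA.1⟩⟩

/-- For every finite-dimensional right `A`-module `M` and every weight
`δ ∈ ℤⁿ`: `f_M(δ) ≤ hom(δ,M)` and `f̌_M(−δ) ≤ e(δ,M)`; dually, for every `δ̌ ∈ ℤⁿ`: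
`f̌_M(δ̌) ≤ hom(M,δ̌)` and `f_M(−δ̌) ≤ ě(M,δ̌)`. -/
theorem statement0 (k : Type) [Field k] [IsAlgClosed k] [CharZero k]
    (A : Type) [Ring A] [Algebra k A] [FiniteDimensional k A]
    {n : ℕ} (e : Fin n → A) (hA : IsBasicSetup A e)
    (M : Type) [AddCommGroup M] [Module k M] [Module Aᵐᵒᵖ M]
    [IsScalarTower k Aᵐᵒᵖ M] [FiniteDimensional k M] :
    (∀ δ : Fin n → ℤ,
      tropF k A e M δ ≤ (homWt k A e M δ : ℤ) ∧
      tropCheck k A e M (-δ) ≤ (eWt k A e M δ : ℤ)) ∧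
    (∀ δc : Fin n → ℤ,
      tropCheck k A e M δc ≤ (ihomWt k A e M δc : ℤ) ∧
      tropF k A e M (-δc) ≤ (ieWt k A e M δc : ℤ)) :=
  statement0_general k A e hA M
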